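/- Let f(x) = ∑_{n ≥ 0} x^{2^n − 1} ∈ ℤ[[x]], which has constant term 1 and hence is invertible, and define δf(x,y) = f(x+y)/(f(x)·f(y)) ∈ ℤ[[x,y]]. Then δf(x,y) · δf(−x,−y) ≡ δf(x,y)² modulo 4ℤ[[x,y]]. -/

import Mathlib

/-- `f(x+y) = ∑_{n ≥ 0} (x+y)^(2^n - 1)` in `ℤ[[x,y]]`: the coefficient of `x^i y^j` is
`C(i+j, i)` if `i + j + 1` is a power of `2`, and `0` otherwise. -/
noncomputable def fXY : MvPowerSeries (Fin 2) ℤ := by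
  classical
  exact fun d =>
    if ∃ n : ℕ, d 0 + d 1 + 1 = 2 ^ n then ((d 0 + d 1).choose (d 0) : ℤ) else 0

/-- `f(-x-y) = ∑_{n ≥ 0} (-(x+y))^(2^n - 1)` in `ℤ[[x,y]]`. -/
noncomputable def fmXY : MvPowerSeries (Fin 2) ℤ := by
  classical
  exact fun d =>
    if ∃ n : ℕ, d 0 + d 1 + 1 = 2 ^ n
    then (-1 : ℤ) ^ (d 0 + d 1) * ((d 0 + d 1).choose (d 0) : ℤ) else 0

/-- `f(x) = ∑_{n ≥ 0} x^(2^n - 1)` in `ℤ[[x,y]]`. -/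
noncomputable def fX : MvPowerSeries (Fin 2) ℤ := by
  classical
  exact fun d => if d 1 = 0 ∧ ∃ n : ℕ, d 0 + 1 = 2 ^ n then 1 else 0

/-- `f(-x)` in `ℤ[[x,y]]`. -/
noncomputable def fmX : MvPowerSeries (Fin 2) ℤ := by
  classical
  exact fun d => if d 1 = 0 ∧ ∃ n : ℕ, d 0 + 1 = 2 ^ n then (-1 : ℤ) ^ (d 0) else 0

/-- `f(y) = ∑_{n ≥ 0} y^(2^n - 1)` in `ℤ[[x,y]]`. -/
noncomputable def fY : MvPowerSeries (Fin 2) ℤ := by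
  classical
  exact fun d => if d 0 = 0 ∧ ∃ n : ℕ, d 1 + 1 = 2 ^ n then 1 else 0

/-- `f(-y)` in `ℤ[[x,y]]`. -/
noncomputable def fmY : MvPowerSeries (Fin 2) ℤ := by
  classical
  exact fun d => if d 0 = 0 ∧ ∃ n : ℕ, d 1 + 1 = 2 ^ n then (-1 : ℤ) ^ (d 1) else 0


/-! Write `e(x) = 1 + 2x f(x)`. All exponents `2ⁿ - 1` with `n ≥ 1` are odd, so `f(-x) = 2 - f(x)`
exactly. Modulo 2, `f(x) = 1 + x f(x²)` and the Frobenius give `f = 1 + x f²`, which is equivalent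
to `(2 - f(x)) e(x) ≡ f(x)` modulo 4. A coefficient check (Pascal's rule, and `C(2ⁿ, i)` even for
`0 < i < 2ⁿ`) gives `x f(x) + y f(y) ≡ (x + y) f(x + y)` modulo 2, hence `e(x) e(y) ≡ e(x + y)`
modulo 4, and together with the identities for `x` and `y` also `f(x + y) ≡ 1 + (x + y) f(x + y)²`
modulo 2. So modulo 4 the twists by `e` cancel in `δf`: `δf(-x,-y) ≡ δf(x,y)`. -/

open MvPowerSeries

section

variable {σ R : Type*}

theorem pow_char_eq_expand {p : ℕ} [Fact p.Prime] (φ : MvPowerSeries σ (ZMod p)) :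
    φ ^ p = expand p (Fact.out : p.Prime).ne_zero φ := by
  rw [← map_frobenius_expand, ZMod.frobenius_zmod, map_id, RingHom.id_apply]

theorem natCast_dvd_of_map_eq_zero {n : ℕ} {φ : MvPowerSeries σ ℤ}
    (h : map (Int.castRingHom (ZMod n)) φ = 0) : (n : MvPowerSeries σ ℤ) ∣ φ := by
  let ψ : MvPowerSeries σ ℤ := fun d => coeff d φ / n
  refine ⟨ψ, ext fun d => ?_⟩
  have hd : (n : ℤ) ∣ coeff d φ := by
    rw [← ZMod.intCast_zmod_eq_zero_iff_dvd, ← eq_intCast (Int.castRingHom (ZMod n)), ← coeff_map,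
      h, map_zero]
  rw [← map_natCast C n, coeff_C_mul, show coeff d ψ = coeff d φ / n from rfl]
  exact (Int.mul_ediv_cancel' hd).symm

theorem eq_two_sub_of_coeff_eq_neg {ψ ψ' : MvPowerSeries σ ℤ}
    (h₀ : constantCoeff ψ = 1) (h₀' : constantCoeff ψ' = 1)
    (h : ∀ d ≠ 0, coeff d ψ' = -coeff d ψ) : ψ' = 2 - ψ := by
  classical
  ext d
  rw [map_sub, ← map_ofNat C 2, coeff_C]
  split_ifs with hd
  · rw [hd, coeff_zero_eq_constantCoeff_apply, coeff_zero_eq_constantCoeff_apply, h₀, h₀']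
    norm_num
  · rw [h d hd, zero_sub]

theorem exists_eq_single_two_pow_sub_one_iff (d : σ →₀ ℕ) (s : σ) :
    (∃ n, d = Finsupp.single s (2 ^ n - 1)) ↔ (∀ t ≠ s, d t = 0) ∧ ∃ n, d s + 1 = 2 ^ n := by
  constructor
  · rintro ⟨n, rfl⟩
    refine ⟨fun t ht => Finsupp.single_eq_of_ne ht, n, ?_⟩
    rw [Finsupp.single_eq_same, Nat.sub_add_cancel Nat.one_le_two_pow]
  · rintro ⟨hd, n, hn⟩
    refine ⟨n, Finsupp.ext fun t => ?_⟩
    rcases eq_or_ne t s with rfl | ht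
    · rw [Finsupp.single_eq_same]; omega
    · rw [Finsupp.single_eq_of_ne ht, hd t ht]

theorem single_two_pow_succ_sub_one (s : σ) (n : ℕ) :
    Finsupp.single s (2 ^ (n + 1) - 1) =
      Finsupp.single s 1 + 2 • Finsupp.single s (2 ^ n - 1) := by
  rw [Finsupp.smul_single, ← Finsupp.single_add, smul_eq_mul]
  congr 1
  have := Nat.one_le_two_pow (n := n)
  rw [pow_succ]
  omega

open scoped Classical in
/-- `f(X s)`, for the paper's `f(x) = ∑ₙ x ^ (2ⁿ - 1)`. -/
noncomputable def twoPowSubOneSeries [Semiring R] (s : σ) : MvPowerSeries σ R :=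
  fun d => if ∃ n, d = Finsupp.single s (2 ^ n - 1) then 1 else 0

open scoped Classical in
theorem coeff_twoPowSubOneSeries [Semiring R] (s : σ) (d : σ →₀ ℕ) :
    coeff d (twoPowSubOneSeries s : MvPowerSeries σ R) =
      if ∃ n, d = Finsupp.single s (2 ^ n - 1) then 1 else 0 :=
  rfl

theorem map_twoPowSubOneSeries {S : Type*} [Semiring R] [Semiring S] (f : R →+* S) (s : σ) :
    map f (twoPowSubOneSeries s) = twoPowSubOneSeries s := by
  ext d
  simp only [coeff_map, coeff_twoPowSubOneSeries]
  split_ifs <;> simp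

theorem constantCoeff_twoPowSubOneSeries [Semiring R] (s : σ) :
    constantCoeff (twoPowSubOneSeries s : MvPowerSeries σ R) = 1 := by
  rw [← coeff_zero_eq_constantCoeff_apply, coeff_twoPowSubOneSeries, if_pos ⟨0, by simp⟩]

theorem twoPowSubOneSeries_eq_one_add_X_mul_expand [CommRing R] (s : σ) :
    (twoPowSubOneSeries s : MvPowerSeries σ R) =
      1 + X s * expand 2 two_ne_zero (twoPowSubOneSeries s) := by
  classical
  ext d
  rw [map_add, coeff_one, X, coeff_monomial_mul, one_mul, coeff_twoPowSubOneSeries]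
  by_cases hd : ∃ n, d = Finsupp.single s (2 ^ n - 1)
  · obtain ⟨n | n, rfl⟩ := hd
    · rw [if_pos ⟨0, rfl⟩]
      simp
    · rw [if_pos ⟨n + 1, rfl⟩, single_two_pow_succ_sub_one, if_neg (by simp),
        if_pos le_self_add, add_tsub_cancel_left, coeff_expand_smul, coeff_twoPowSubOneSeries,
        if_pos ⟨n, rfl⟩, zero_add]
  · have hd0 : d ≠ 0 := fun h => hd ⟨0, by simp [h]⟩
    rw [if_neg hd, if_neg hd0, zero_add]
    split_ifs with hle
    · by_contra hne
      obtain ⟨m, hm, hdm⟩ := support_expand_subset 2 two_ne_zero _ (Ne.symm hne)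
      obtain ⟨n, rfl⟩ : ∃ n, m = Finsupp.single s (2 ^ n - 1) := by
        by_contra h; exact hm (if_neg h)
      refine hd ⟨n + 1, ?_⟩
      rw [single_two_pow_succ_sub_one,
        show 2 • Finsupp.single s (2 ^ n - 1) = d - Finsupp.single s 1 from hdm,
        add_tsub_cancel_of_le hle]
    · rfl

theorem twoPowSubOneSeries_eq_one_add_X_mul_sq (s : σ) :
    (twoPowSubOneSeries s : MvPowerSeries σ (ZMod 2)) = 1 + X s * twoPowSubOneSeries s ^ 2 := by
  rw [pow_char_eq_expand, ← twoPowSubOneSeries_eq_one_add_X_mul_expand]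

open scoped Classical in
theorem coeff_X_mul_twoPowSubOneSeries [Semiring R] (s : σ) (d : σ →₀ ℕ) :
    coeff d (X s * twoPowSubOneSeries s : MvPowerSeries σ R) =
      if ∃ n, d = Finsupp.single s (2 ^ n) then 1 else 0 := by
  rw [X, coeff_monomial_mul, one_mul, coeff_twoPowSubOneSeries]
  by_cases hle : Finsupp.single s 1 ≤ d
  · rw [if_pos hle]
    refine if_congr (exists_congr fun n => ?_) rfl rfl
    rw [tsub_eq_iff_eq_add_of_le hle, ← Finsupp.single_add, Nat.sub_add_cancel Nat.one_le_two_pow]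
  · rw [if_neg hle, if_neg]
    rintro ⟨n, rfl⟩
    exact hle (Finsupp.single_le_iff.2 (by simpa using Nat.one_le_two_pow))

theorem two_dvd_twoPowSubOneSeries_sub (s : σ) :
    (2 : MvPowerSeries σ ℤ) ∣ twoPowSubOneSeries s - (1 + X s * twoPowSubOneSeries s ^ 2) := by
  refine natCast_dvd_of_map_eq_zero (n := 2) ?_
  rw [map_sub, map_add, map_one, map_mul, map_pow, map_X, map_twoPowSubOneSeries, sub_eq_zero]
  exact twoPowSubOneSeries_eq_one_add_X_mul_sq s

end

theorem neg_one_pow_of_add_one_eq_two_pow {k n : ℕ} (h : k + 1 = 2 ^ n) (hk : k ≠ 0) :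
    (-1 : ℤ) ^ k = -1 := by
  rcases n with _ | n
  · omega
  · exact Odd.neg_one_pow ⟨2 ^ n - 1, by rw [pow_succ] at h; omega⟩

theorem eq_one_add_mul_sq_of_mul_eq_add {R : Type*} [CommRing R] [NoZeroDivisors R] [CharP R 2]
    {x y F G H : R} (hF : F = 1 + x * F ^ 2) (hG : G = 1 + y * G ^ 2)
    (hH : (x + y) * H = x * F + y * G) (hxy : x + y ≠ 0) : H = 1 + (x + y) * H ^ 2 := by
  apply mul_left_cancel₀ hxy
  calc (x + y) * H = x * F + y * G := hH
    _ = (x + y) + (x * F + y * G) ^ 2 := by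
      rw [CharTwo.add_sq]
      linear_combination x * hF + y * hG
    _ = (x + y) * (1 + (x + y) * H ^ 2) := by rw [← hH]; ring
section ModFour

variable {R : Type*} [CommRing R]

theorem four_dvd_two_sub_mul_sub_of_two_dvd {t F : R} (h : 2 ∣ F - (1 + t * F ^ 2)) :
    4 ∣ (2 - F) * (1 + 2 * t * F) - F := by
  obtain ⟨c, hc⟩ := h
  exact ⟨t * F - t * F ^ 2 - c, by linear_combination (-2) * hc⟩

theorem four_dvd_mul_sub_of_two_dvd {x y F G H : R} (h : 2 ∣ (x + y) * H - (x * F + y * G)) :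
    4 ∣ (1 + 2 * x * F) * (1 + 2 * y * G) - (1 + 2 * (x + y) * H) := by
  obtain ⟨c, hc⟩ := h
  exact ⟨x * F * y * G - c, by linear_combination (-2) * hc⟩

theorem eq_of_twist_by_multiplicative {D D' F G H F' G' H' e₁ e₂ e₃ : R}
    (hFG : IsUnit (F * G)) (hD : D * (F * G) = H) (hD' : D' * (F' * G') = H')
    (hF : F' * e₁ = F) (hG : G' * e₂ = G) (hH : H' * e₃ = H) (he : e₁ * e₂ = e₃) : D' = D :=
  hFG.mul_right_cancel <| by
    calc D' * (F * G) = D' * (F' * G') * (e₁ * e₂) := by rw [← hF, ← hG]; ring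
      _ = D * (F * G) := by rw [hD', he, hH, hD]

theorem four_dvd_sub_of_two_dvd {x y F G H D D' : R} (hFG : IsUnit (F * G))
    (hD : D * (F * G) = H) (hD' : D' * ((2 - F) * (2 - G)) = 2 - H)
    (hF : 2 ∣ F - (1 + x * F ^ 2)) (hG : 2 ∣ G - (1 + y * G ^ 2))
    (hH : 2 ∣ H - (1 + (x + y) * H ^ 2)) (hadd : 2 ∣ (x + y) * H - (x * F + y * G)) :
    4 ∣ D' - D := by
  let π := Ideal.Quotient.mk (Ideal.span {(4 : R)})
  have mk_eq {a b : R} (h : 4 ∣ a - b) : π a = π b :=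
    Ideal.Quotient.eq.2 (Ideal.mem_span_singleton.2 h)
  rw [← Ideal.mem_span_singleton, ← Ideal.Quotient.eq]
  refine eq_of_twist_by_multiplicative (F := π F) (G := π G) (H := π H) (F' := π (2 - F))
    (G' := π (2 - G)) (H' := π (2 - H)) (e₁ := π (1 + 2 * x * F)) (e₂ := π (1 + 2 * y * G))
    (e₃ := π (1 + 2 * (x + y) * H)) ?_ ?_ ?_ ?_ ?_ ?_ ?_ <;>
    simp only [← map_mul]
  exacts [hFG.map π, congrArg π hD, congrArg π hD', mk_eq (four_dvd_two_sub_mul_sub_of_two_dvd hF),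
    mk_eq (four_dvd_two_sub_mul_sub_of_two_dvd hG), mk_eq (four_dvd_two_sub_mul_sub_of_two_dvd hH),
    mk_eq (four_dvd_mul_sub_of_two_dvd hadd)]

end ModFour

theorem fX_eq : fX = twoPowSubOneSeries 0 := by
  classical
  ext d
  rw [coeff_twoPowSubOneSeries]
  refine if_congr ?_ rfl rfl
  rw [exists_eq_single_two_pow_sub_one_iff]
  simp [Fin.forall_fin_two]

theorem fY_eq : fY = twoPowSubOneSeries 1 := by
  classical
  ext d
  rw [coeff_twoPowSubOneSeries]
  refine if_congr ?_ rfl rfl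
  rw [exists_eq_single_two_pow_sub_one_iff]
  simp [Fin.forall_fin_two]

open scoped Classical in
theorem coeff_fXY (d : Fin 2 →₀ ℕ) :
    coeff d fXY = if ∃ n, d 0 + d 1 + 1 = 2 ^ n then ((d 0 + d 1).choose (d 0) : ℤ) else 0 :=
  rfl

theorem constantCoeff_fXY : constantCoeff fXY = 1 := by
  rw [← coeff_zero_eq_constantCoeff_apply, coeff_fXY, if_pos ⟨0, rfl⟩]
  simp

theorem isUnit_fX_mul_fY : IsUnit (fX * fY) := by
  rw [isUnit_iff_constantCoeff, map_mul, fX_eq, fY_eq, constantCoeff_twoPowSubOneSeries,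
    constantCoeff_twoPowSubOneSeries, mul_one]
  exact isUnit_one

theorem apply_zero_add_apply_one_ne_zero {d : Fin 2 →₀ ℕ} (hd : d ≠ 0) : d 0 + d 1 ≠ 0 :=
  fun h => hd (Finsupp.ext fun i => by fin_cases i <;> simp <;> omega)

theorem fmX_eq : fmX = 2 - fX := by
  classical
  refine eq_two_sub_of_coeff_eq_neg (by rw [fX_eq, constantCoeff_twoPowSubOneSeries]) ?_
    fun d hd => ?_
  · rw [← coeff_zero_eq_constantCoeff_apply]
    show (if _ then _ else _) = _
    rw [if_pos ⟨rfl, 0, rfl⟩, Finsupp.coe_zero, Pi.zero_apply, pow_zero]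
  · show (if _ then _ else _) = -(if _ then _ else _)
    split_ifs with h
    · obtain ⟨h1, n, hn⟩ := h
      exact neg_one_pow_of_add_one_eq_two_pow hn
        (by simpa [h1] using apply_zero_add_apply_one_ne_zero hd)
    · rfl

theorem fmY_eq : fmY = 2 - fY := by
  classical
  refine eq_two_sub_of_coeff_eq_neg (by rw [fY_eq, constantCoeff_twoPowSubOneSeries]) ?_
    fun d hd => ?_
  · rw [← coeff_zero_eq_constantCoeff_apply]
    show (if _ then _ else _) = _
    rw [if_pos ⟨rfl, 0, rfl⟩, Finsupp.coe_zero, Pi.zero_apply, pow_zero]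
  · show (if _ then _ else _) = -(if _ then _ else _)
    split_ifs with h
    · obtain ⟨h0, n, hn⟩ := h
      exact neg_one_pow_of_add_one_eq_two_pow hn
        (by simpa [h0] using apply_zero_add_apply_one_ne_zero hd)
    · rfl

theorem fmXY_eq : fmXY = 2 - fXY := by
  classical
  refine eq_two_sub_of_coeff_eq_neg constantCoeff_fXY ?_ fun d hd => ?_
  · rw [← coeff_zero_eq_constantCoeff_apply]
    show (if _ then _ else _) = _
    rw [if_pos ⟨0, rfl⟩]
    simp
  · show (if _ then _ else _) = -coeff d fXY
    rw [coeff_fXY]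
    split_ifs with h
    · obtain ⟨n, hn⟩ := h
      rw [neg_one_pow_of_add_one_eq_two_pow hn (apply_zero_add_apply_one_ne_zero hd), neg_one_mul]
    · rfl

open scoped Classical in
theorem coeff_X_add_X_mul_fXY (d : Fin 2 →₀ ℕ) :
    coeff d ((X 0 + X 1) * fXY) =
      if ∃ n, d 0 + d 1 = 2 ^ n then ((d 0 + d 1).choose (d 0) : ℤ) else 0 := by
  rw [add_mul, map_add, X, X, coeff_monomial_mul, coeff_monomial_mul, one_mul, one_mul,
    coeff_fXY, coeff_fXY]
  simp only [Finsupp.single_le_iff, Finsupp.tsub_apply, Finsupp.single_eq_same,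
    Finsupp.single_eq_of_ne zero_ne_one, Finsupp.single_eq_of_ne one_ne_zero, Nat.sub_zero]
  generalize d 0 = i, d 1 = j
  rcases i with _ | a <;> rcases j with _ | b
  · simpa using fun n h => (Nat.two_pow_pos n).ne' h.symm
  · simp [add_comm]
  · simp
  · simp only [Nat.le_add_left, if_true, Nat.add_sub_cancel]
    rw [show a + (b + 1) + 1 = a + 1 + (b + 1) by ring, show a + 1 + b + 1 = a + 1 + (b + 1) by ring]
    split_ifs
    · rw [show a + (b + 1) = a + b + 1 by ring, show a + 1 + b = a + b + 1 by ring,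
        show a + 1 + (b + 1) = a + b + 1 + 1 by ring, Nat.choose_succ_succ (a + b + 1) a, Nat.cast_add]
    · simp

theorem X_mul_add_X_mul_twoPowSubOneSeries_eq_map :
    (X 0 * twoPowSubOneSeries 0 + X 1 * twoPowSubOneSeries 1 : MvPowerSeries (Fin 2) (ZMod 2)) =
      map (Int.castRingHom (ZMod 2)) ((X 0 + X 1) * fXY) := by
  ext d
  have single_zero_iff (k : ℕ) : d = Finsupp.single 0 k ↔ d 0 = k ∧ d 1 = 0 := by
    simp [DFunLike.ext_iff, Fin.forall_fin_two]
  have single_one_iff (k : ℕ) : d = Finsupp.single 1 k ↔ d 0 = 0 ∧ d 1 = k := by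
    simp [DFunLike.ext_iff, Fin.forall_fin_two]
  rw [map_add, coeff_X_mul_twoPowSubOneSeries, coeff_X_mul_twoPowSubOneSeries, coeff_map,
    coeff_X_add_X_mul_fXY]
  by_cases hsum : ∃ n, d 0 + d 1 = 2 ^ n
  · obtain ⟨n, hn⟩ := hsum
    rw [if_pos (show ∃ n, d 0 + d 1 = 2 ^ n from ⟨n, hn⟩), hn]
    have hx : (∃ m, d = Finsupp.single 0 (2 ^ m)) ↔ d 1 = 0 := by
      simp only [single_zero_iff]
      exact ⟨fun ⟨_, _, h⟩ => h, fun h => ⟨n, by omega, h⟩⟩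
    have hy : (∃ m, d = Finsupp.single 1 (2 ^ m)) ↔ d 0 = 0 := by
      simp only [single_one_iff]
      exact ⟨fun ⟨_, h, _⟩ => h, fun h => ⟨n, h, by omega⟩⟩
    have hxy : ¬(d 0 = 0 ∧ d 1 = 0) := fun h => (Nat.two_pow_pos n).ne' (by omega)
    by_cases h0 : d 0 = 0
    · rw [if_neg (hx.not.2 (by tauto)), if_pos (hy.2 h0), h0, Nat.choose_zero_right]
      simp
    by_cases h1 : d 1 = 0
    · rw [if_pos (hx.2 h1), if_neg (hy.not.2 h0), ← hn, h1, Nat.add_zero, Nat.choose_self]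
      simp
    rw [if_neg (hx.not.2 h1), if_neg (hy.not.2 h0), zero_add, eq_comm, eq_intCast,
      Int.cast_natCast, ZMod.natCast_eq_zero_iff]
    exact Nat.prime_two.dvd_choose_pow h0 (by omega)
  · rw [if_neg hsum, if_neg, if_neg, add_zero, map_zero]
    all_goals
      rintro ⟨m, hm⟩
      refine hsum ⟨m, ?_⟩
      simp only [single_zero_iff, single_one_iff] at hm
      omega

theorem two_dvd_X_add_X_mul_fXY_sub :
    (2 : MvPowerSeries (Fin 2) ℤ) ∣ (X 0 + X 1) * fXY - (X 0 * fX + X 1 * fY) := by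
  refine natCast_dvd_of_map_eq_zero (n := 2) ?_
  rw [map_sub, ← X_mul_add_X_mul_twoPowSubOneSeries_eq_map, map_add, map_mul, map_mul, map_X,
    map_X, fX_eq, fY_eq, map_twoPowSubOneSeries, map_twoPowSubOneSeries, sub_self]

theorem two_dvd_fXY_sub : (2 : MvPowerSeries (Fin 2) ℤ) ∣ fXY - (1 + (X 0 + X 1) * fXY ^ 2) := by
  refine natCast_dvd_of_map_eq_zero (n := 2) ?_
  have : CharP (MvPowerSeries (Fin 2) (ZMod 2)) 2 := charP_of_injective_algebraMap C_injective 2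
  have hxy : (X 0 + X 1 : MvPowerSeries (Fin 2) (ZMod 2)) ≠ 0 := fun h => by
    simpa [coeff_X, Finsupp.single_left_inj] using congrArg (coeff (Finsupp.single 0 1)) h
  have hH := X_mul_add_X_mul_twoPowSubOneSeries_eq_map
  rw [map_mul, map_add, map_X, map_X] at hH
  rw [map_sub, map_add, map_one, map_mul, map_pow, map_add, map_X, map_X, sub_eq_zero]
  exact eq_one_add_mul_sq_of_mul_eq_add (twoPowSubOneSeries_eq_one_add_X_mul_sq 0)
    (twoPowSubOneSeries_eq_one_add_X_mul_sq 1) hH.symm hxy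

/-- `D` and `Dm` are `δf(x,y)` and `δf(-x,-y)`, given by their defining equations. -/
theorem statement10 (D Dm : MvPowerSeries (Fin 2) ℤ)
    (hD : D * (fX * fY) = fXY)
    (hDm : Dm * (fmX * fmY) = fmXY)
    (d : Fin 2 →₀ ℕ) :
    (4 : ℤ) ∣ MvPowerSeries.coeff d (D * Dm - D ^ 2) := by
  rw [fmX_eq, fmY_eq, fmXY_eq] at hDm
  have hF : (2 : MvPowerSeries (Fin 2) ℤ) ∣ fX - (1 + X 0 * fX ^ 2) :=
    fX_eq ▸ two_dvd_twoPowSubOneSeries_sub 0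
  have hG : (2 : MvPowerSeries (Fin 2) ℤ) ∣ fY - (1 + X 1 * fY ^ 2) :=
    fY_eq ▸ two_dvd_twoPowSubOneSeries_sub 1
  have hDmD : 4 ∣ Dm - D := four_dvd_sub_of_two_dvd isUnit_fX_mul_fY hD hDm hF hG
    two_dvd_fXY_sub two_dvd_X_add_X_mul_fXY_sub
  obtain ⟨c, hc⟩ : (4 : MvPowerSeries (Fin 2) ℤ) ∣ D * Dm - D ^ 2 := by
    rw [show D * Dm - D ^ 2 = D * (Dm - D) by ring]
    exact hDmD.mul_left D
  rw [hc, ← map_ofNat C 4, coeff_C_mul]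
  exact dvd_mul_right _ _
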